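/- arXiv:2203.15862 — 3 statements merged into one kernel-verified Lean document; each statement's English description precedes it below -/
import Mathlib

section
/- Let (G,s,z,δ,k) be an instance of Short Restless Temporal Path with d(s,1) ≤ k and let T be the table defined from this instance. If T[z,t_z] ≤ k for some vertex appearance (z,t_z) with z incident to an edge of E_{t_z}, then there is a δ-restless temporal s-z path of length at most k in G. -/
/-!
Every finite entry `T[u,t']` is witnessed by a `δ`-restless `s`-`u` path of length at most
`T[u,t']` that arrives at `u` no later than `t'` and at most `δ` before it, and all of whose
vertex appearances are strictly farther from `z` than `(u,t')`. This invariant is proved along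
the recursion of the table: a recursive entry glues such a witness for `(v,t)` to a shortest
restless `v`-`u` path in `G_{v,t}^{u,t'}`. The two pieces share only `v`, because distances to
`z` are monotone in time: each vertex of the first piece stays farther from `z` than `(v,t)` at
all times after `t`, while each later vertex of the second piece is closer than `(v,t)` at some
such time.
-/

attribute [local instance] Classical.propDecidable

noncomputable section

/-- A temporal graph: a lifetime `tau` and, for each time step, a set of
undirected edges (unordered pairs of distinct vertices) over `V`;
edges exist only at time steps in `[1, tau]`. -/
structure TemporalGraph (V : Type*) where
  tau : ℕ
  E : ℕ → Sym2 V → Prop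
  time_mem : ∀ t e, E t e → 1 ≤ t ∧ t ≤ tau
  not_diag : ∀ t e, E t e → ¬ e.IsDiag

namespace TemporalGraph

variable {V : Type*}

/-- `G.IsPath s z m vs ts` : the sequence `(({vs (i-1), vs i}, ts i))_{i=1}^m` is a
temporal `s`-`z` path of length `m` in `G` (pairwise distinct vertices
`vs 0 = s, vs 1, …, vs m = z` and nondecreasing time stamps). -/
def IsPath (G : TemporalGraph V) (s z : V) (m : ℕ) (vs : ℕ → V) (ts : ℕ → ℕ) : Prop :=
  vs 0 = s ∧ vs m = z ∧
  (∀ i j, i ≤ m → j ≤ m → i ≠ j → vs i ≠ vs j) ∧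
  (∀ i, 1 ≤ i → i ≤ m → G.E (ts i) s(vs (i - 1), vs i)) ∧
  (∀ i, 1 ≤ i → i + 1 ≤ m → ts i ≤ ts (i + 1))

/-- `δ`-restless temporal path: consecutive time-edges are at most `δ` time steps apart. -/
def IsRestlessPath (G : TemporalGraph V) (δ : ℕ) (s z : V) (m : ℕ) (vs : ℕ → V)
    (ts : ℕ → ℕ) : Prop :=
  G.IsPath s z m vs ts ∧ ∀ i, 1 ≤ i → i + 1 ≤ m → ts (i + 1) ≤ ts i + δ

/-- temporal `s`-`z` walk (vertices may repeat). -/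
def IsWalk (G : TemporalGraph V) (s z : V) (m : ℕ) (vs : ℕ → V) (ts : ℕ → ℕ) : Prop :=
  vs 0 = s ∧ vs m = z ∧
  (∀ i, 1 ≤ i → i ≤ m → G.E (ts i) s(vs (i - 1), vs i)) ∧
  (∀ i, 1 ≤ i → i + 1 ≤ m → ts i ≤ ts (i + 1))

/-- `δ`-restless temporal walk. -/
def IsRestlessWalk (G : TemporalGraph V) (δ : ℕ) (s z : V) (m : ℕ) (vs : ℕ → V)
    (ts : ℕ → ℕ) : Prop :=
  G.IsWalk s z m vs ts ∧ ∀ i, 1 ≤ i → i + 1 ≤ m → ts (i + 1) ≤ ts i + δ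

/-- `G.dist z v t` : the minimum length of a temporal `v`-`z` path in `G` whose
departure time is at least `t`; `⊤` if no such path exists, and `0` for `v = z`. -/
def dist (G : TemporalGraph V) (z v : V) (t : ℕ) : ℕ∞ :=
  if v = z then 0
  else sInf {x : ℕ∞ | ∃ (m : ℕ) (vs : ℕ → V) (ts : ℕ → ℕ),
    G.IsPath v z m vs ts ∧ t ≤ ts 1 ∧ x = (m : ℕ∞)}

/-- The set `A_{a,t}^{b,t'}` of vertex appearances. -/
def AreaAB (G : TemporalGraph V) (z a : V) (t : ℕ) (b : V) (t' : ℕ) : Set (V × ℕ) :=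
  {w | G.dist z b t' < G.dist z w.1 w.2 ∧ G.dist z w.1 w.2 < G.dist z a t ∧
       t ≤ w.2 ∧ w.2 ≤ t'}

/-- The set `A^{b,t'}` of vertex appearances. -/
def AreaB (G : TemporalGraph V) (z b : V) (t' : ℕ) : Set (V × ℕ) :=
  {w | G.dist z b t' < G.dist z w.1 w.2 ∧ G.dist z w.1 w.2 < ⊤ ∧ w.2 ≤ t'}

/-- The temporal graph `G_{a,t}^{b,t'}`. -/
def SubAB (G : TemporalGraph V) (z : V) (δ : ℕ) (a : V) (t : ℕ) (b : V) (t' : ℕ) :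
    TemporalGraph V where
  tau := G.tau
  E := fun u e =>
    (G.E u e ∧ ∃ x y, e = s(x, y) ∧ (x, u) ∈ G.AreaAB z a t b t' ∧
        (y, u) ∈ G.AreaAB z a t b t') ∨
    (G.E u e ∧ u = t ∧ ∃ x, e = s(a, x) ∧ (x, t) ∈ G.AreaAB z a t b t') ∨
    (G.E u e ∧ t' ≤ u + δ ∧ ∃ x, e = s(x, b) ∧
        ((x, u) ∈ G.AreaAB z a t b t' ∨ (x = a ∧ u = t)))
  time_mem := by rintro u e (⟨h, -⟩ | ⟨h, -⟩ | ⟨h, -⟩) <;> exact G.time_mem u e h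
  not_diag := by rintro u e (⟨h, -⟩ | ⟨h, -⟩ | ⟨h, -⟩) <;> exact G.not_diag u e h

/-- The temporal graph `G^{b,t'}`. -/
def SubB (G : TemporalGraph V) (z : V) (δ : ℕ) (b : V) (t' : ℕ) : TemporalGraph V where
  tau := G.tau
  E := fun u e =>
    (G.E u e ∧ ∃ x y, e = s(x, y) ∧ (x, u) ∈ G.AreaB z b t' ∧ (y, u) ∈ G.AreaB z b t') ∨
    (G.E u e ∧ t' ≤ u + δ ∧ ∃ x, e = s(x, b) ∧ (x, u) ∈ G.AreaB z b t')
  time_mem := by rintro u e (⟨h, -⟩ | ⟨h, -⟩) <;> exact G.time_mem u e h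
  not_diag := by rintro u e (⟨h, -⟩ | ⟨h, -⟩) <;> exact G.not_diag u e h

/-- The vertex set of a temporal graph: all endpoints of its time-edges. -/
def vertexSet (G : TemporalGraph V) : Set V := {x | ∃ u e, G.E u e ∧ x ∈ e}

/-- Minimum length of a `δ`-restless temporal `a`-`b` path in `G` (`⊤` if none). -/
def restlessDist (G : TemporalGraph V) (δ : ℕ) (a b : V) : ℕ∞ :=
  sInf {x : ℕ∞ | ∃ m vs ts, G.IsRestlessPath δ a b m vs ts ∧ x = (m : ℕ∞)}

/-- The base case of the table `T`: the value `T[u,t']` when `d(s,1) - d(u,t') ≤ ℓ`. -/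
def tableBase (G : TemporalGraph V) (s z : V) (δ ℓ : ℕ) (u : V) (t' : ℕ) : ℕ∞ :=
  if u = s then 0
  else if 1 ≤ restlessDist (G.SubB z δ u t') δ s u ∧
          restlessDist (G.SubB z δ u t') δ s u ≤ (2 * ℓ : ℕ)
    then restlessDist (G.SubB z δ u t') δ s u
    else ⊤

/-- Fuelled version of the recursively defined table `T` (the fuel is an upper
bound on the recursion depth, which strictly decreases along the recursion of
the table via `d(s,1) - d(·,·)`). -/
def tableFuel (G : TemporalGraph V) (s z : V) (δ ℓ : ℕ) : ℕ → V → ℕ → ℕ∞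
  | 0, u, t' => tableBase G s z δ ℓ u t'
  | n + 1, u, t' =>
    if G.dist z s 1 - G.dist z u t' ≤ (ℓ : ℕ∞) then tableBase G s z δ ℓ u t'
    else sInf (insert ⊤ {x : ℕ∞ | ∃ (v : V) (t ℓ' : ℕ),
      1 ≤ t ∧ t ≤ t' ∧ (∃ e, G.E t e ∧ v ∈ e) ∧
      G.dist z u t' < G.dist z v t ∧ G.dist z v t ≤ G.dist z u t' + (ℓ : ℕ∞) + 1 ∧
      1 ≤ ℓ' ∧ ℓ' ≤ 2 * ℓ + 1 ∧
      restlessDist (G.SubAB z δ v t u t') δ v u = (ℓ' : ℕ∞) ∧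
      x = tableFuel G s z δ ℓ n v t + (ℓ' : ℕ∞)})

/-- The table `T` of the dynamic program, for the instance `(G,s,z,δ,k)`
(with `ℓ := k - d(s,1)`). -/
def table (G : TemporalGraph V) (s z : V) (δ k : ℕ) (u : V) (t' : ℕ) : ℕ∞ :=
  tableFuel G s z δ (k - (G.dist z s 1).toNat) ((G.dist z s 1).toNat + 1) u t'

/-- `vs i` is a distance separator of the temporal `s`-`z` path
`(({vs (i-1), vs i}, ts i))_{i=1}^k` (with the convention `ts (k+1) = ts k`). -/
def IsDistSep (G : TemporalGraph V) (z : V) (k : ℕ) (vs : ℕ → V) (ts : ℕ → ℕ)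
    (i : ℕ) : Prop :=
  (∀ j, j < i → G.dist z (vs i) (ts (i + 1)) < G.dist z (vs j) (ts (j + 1))) ∧
  (∀ j, i < j → j ≤ k → G.dist z (vs j) (ts (j + 1)) < G.dist z (vs i) (ts (i + 1)))

/-- The underlying (static) graph of a temporal graph. -/
def underlying (G : TemporalGraph V) : SimpleGraph V where
  Adj x y := ∃ t, G.E t s(x, y)
  symm := by
    constructor
    rintro x y ⟨t, h⟩
    exact ⟨t, by rwa [Sym2.eq_swap]⟩
  loopless := by
    constructor
    rintro x ⟨t, h⟩
    exact G.not_diag t _ h (by simp)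

/-- The set of non-isolated vertex appearances of `G`. -/
def NonIsolated (G : TemporalGraph V) : Set (V × ℕ) := {p | ∃ e, G.E p.2 e ∧ p.1 ∈ e}

/-- The weighted arcs of the auxiliary directed graph `D` (for destination `z`):
`DArc G z x y w` means there is an arc from `x` to `y` of weight `w`.
`Sum.inl ()` is the special vertex `z` of `D`; `Sum.inr (v, t)` is the vertex `v_t`. -/
def DArc (G : TemporalGraph V) (z : V) : Unit ⊕ V × ℕ → Unit ⊕ V × ℕ → ℕ → Prop
  | Sum.inr (v, ta), Sum.inr (u, tb), w =>
      (w = 1 ∧ ta = tb ∧ v ≠ u ∧ G.E ta s(v, u)) ∨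
      (w = 0 ∧ v = u ∧ (v, ta) ∈ G.NonIsolated ∧ (v, tb) ∈ G.NonIsolated ∧ tb < ta ∧
        ∀ t'', tb < t'' → t'' < ta → (v, t'') ∉ G.NonIsolated)
  | Sum.inl _, Sum.inr (u, tb), w =>
      w = 0 ∧ u = z ∧ (z, tb) ∈ G.NonIsolated ∧
        ∀ t'', (z, t'') ∈ G.NonIsolated → t'' ≤ tb
  | _, _, _ => False

/-- The minimum total arc weight of a directed path in `D` from the special
vertex `z` to the vertex `v_t` (`⊤` if `v_t` is not reachable from `z`). -/
def dMinWeight (G : TemporalGraph V) (z v : V) (t : ℕ) : ℕ∞ :=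
  sInf {x : ℕ∞ | ∃ (n : ℕ) (w : ℕ → Unit ⊕ V × ℕ) (wt : ℕ → ℕ),
    w 0 = Sum.inl () ∧ w n = Sum.inr (v, t) ∧
    (∀ i j, i ≤ n → j ≤ n → i ≠ j → w i ≠ w j) ∧
    (∀ i, i < n → DArc G z (w i) (w (i + 1)) (wt i)) ∧
    x = ∑ i ∈ Finset.range n, (wt i : ℕ∞)}

end TemporalGraph

theorem ENat.sInf_mem_of_ne_top {S : Set ℕ∞} (h : sInf S ≠ ⊤) : sInf S ∈ S :=
  csInf_mem (Set.nonempty_iff_ne_empty.2 fun hS => h (hS ▸ sInf_empty))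

section ConcatSeq

variable {α : Type*} {m i : ℕ} {f g : ℕ → α}

def concatSeq (m : ℕ) (f g : ℕ → α) (i : ℕ) : α := if i ≤ m then f i else g (i - m)

theorem concatSeq_of_le (h : i ≤ m) : concatSeq m f g i = f i := if_pos h

theorem concatSeq_of_lt (h : m < i) : concatSeq m f g i = g (i - m) := if_neg h.not_ge

theorem concatSeq_of_ge (hfg : f m = g 0) (h : m ≤ i) : concatSeq m f g i = g (i - m) := by
  rcases h.eq_or_lt with rfl | h
  · rw [concatSeq_of_le le_rfl, Nat.sub_self, hfg]
  · exact concatSeq_of_lt h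

theorem concatSeq_rel_succ (r : α → α → Prop) {n : ℕ}
    (hf : ∀ i, 1 ≤ i → i + 1 ≤ m → r (f i) (f (i + 1)))
    (hg : ∀ i, 1 ≤ i → i + 1 ≤ n → r (g i) (g (i + 1))) (hfg : r (f m) (g 1)) :
    ∀ i, 1 ≤ i → i + 1 ≤ m + n → r (concatSeq m f g i) (concatSeq m f g (i + 1)) := by
  intro i hi1 hin
  rcases lt_trichotomy i m with hlt | rfl | hgt
  · rw [concatSeq_of_le hlt.le, concatSeq_of_le hlt]
    exact hf i hi1 hlt
  · rw [concatSeq_of_le le_rfl, concatSeq_of_lt (Nat.lt_add_one i), Nat.add_sub_cancel_left]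
    exact hfg
  · rw [concatSeq_of_lt hgt, concatSeq_of_lt (by omega), show i + 1 - m = i - m + 1 by omega]
    exact hg _ (by omega) (by omega)

end ConcatSeq

namespace TemporalGraph

variable {V : Type*}

section Paths

variable {G H : TemporalGraph V} {δ m i : ℕ} {s u : V} {vs : ℕ → V} {ts : ℕ → ℕ}

theorem IsPath.edge (hP : G.IsPath s u m vs ts) (hi : i < m) :
    G.E (ts (i + 1)) s(vs i, vs (i + 1)) := by
  simpa using hP.2.2.2.1 (i + 1) (by omega) hi

theorem IsPath.last_edge (hP : G.IsPath s u m vs ts) (hm : 1 ≤ m) :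
    G.E (ts m) s(vs (m - 1), u) := by
  simpa [Nat.sub_add_cancel hm, hP.2.1] using hP.edge (i := m - 1) (by omega)

theorem IsPath.ne_last (hP : G.IsPath s u m vs ts) (hi : i < m) : vs i ≠ u :=
  hP.2.1 ▸ hP.2.2.1 i m hi.le le_rfl hi.ne

theorem IsPath.ne_first (hP : G.IsPath s u m vs ts) (hi0 : 0 < i) (hi : i ≤ m) : vs i ≠ s :=
  hP.1 ▸ hP.2.2.1 i 0 hi (Nat.zero_le m) hi0.ne'

theorem IsPath.one_le_length (hP : G.IsPath s u m vs ts) (hsu : s ≠ u) : 1 ≤ m := by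
  by_contra! hm
  obtain rfl : m = 0 := by omega
  exact hsu (hP.1.symm.trans hP.2.1)

theorem IsPath.time_le_time (hP : G.IsPath s u m vs ts) {a b : ℕ} (ha : 1 ≤ a) (hab : a ≤ b)
    (hb : b ≤ m) : ts a ≤ ts b := by
  induction b, hab using Nat.le_induction with
  | base => exact le_rfl
  | succ b hab ih => exact (ih (by omega)).trans (hP.2.2.2.2 b (by omega) hb)

theorem IsRestlessPath.mono (hHG : ∀ t e, H.E t e → G.E t e)
    (hP : H.IsRestlessPath δ s u m vs ts) : G.IsRestlessPath δ s u m vs ts :=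
  let ⟨⟨h0, hm, hinj, hE, hle⟩, hδ⟩ := hP
  ⟨⟨h0, hm, hinj, fun i hi1 hi => hHG _ _ (hE i hi1 hi), hle⟩, hδ⟩

theorem IsRestlessPath.append {v : V} {mQ mR : ℕ} {vsQ vsR : ℕ → V} {tsQ tsR : ℕ → ℕ}
    (hQ : G.IsRestlessPath δ s v mQ vsQ tsQ) (hR : G.IsRestlessPath δ v u mR vsR tsR)
    (hdisj : ∀ i < mQ, ∀ j, 1 ≤ j → j ≤ mR → vsQ i ≠ vsR j)
    (hjoin : tsQ mQ ≤ tsR 1 ∧ tsR 1 ≤ tsQ mQ + δ) :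
    G.IsRestlessPath δ s u (mQ + mR) (concatSeq mQ vsQ vsR) (concatSeq mQ tsQ tsR) := by
  obtain ⟨⟨hQ0, hQm, hQinj, hQE, hQle⟩, hQδ⟩ := hQ
  obtain ⟨⟨hR0, hRm, hRinj, hRE, hRle⟩, hRδ⟩ := hR
  have hvs_ge : ∀ i, mQ ≤ i → concatSeq mQ vsQ vsR i = vsR (i - mQ) :=
    fun i => concatSeq_of_ge (hQm.trans hR0.symm)
  have hne : ∀ i j, i < j → j ≤ mQ + mR → concatSeq mQ vsQ vsR i ≠ concatSeq mQ vsQ vsR j := by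
    intro i j hij hj
    rcases le_or_gt j mQ with hjQ | hjQ
    · rw [concatSeq_of_le hjQ, concatSeq_of_le (hij.le.trans hjQ)]
      exact hQinj i j (by omega) hjQ hij.ne
    rw [hvs_ge j hjQ.le]
    rcases lt_or_ge i mQ with hiQ | hiQ
    · rw [concatSeq_of_le hiQ.le]
      exact hdisj i hiQ (j - mQ) (by omega) (by omega)
    · rw [hvs_ge i hiQ]
      exact hRinj _ _ (by omega) (by omega) (by omega)
  refine ⟨⟨?_, ?_, ?_, ?_, concatSeq_rel_succ _ hQle hRle hjoin.1⟩,
    concatSeq_rel_succ (fun a b => b ≤ a + δ) hQδ hRδ hjoin.2⟩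
  · rw [concatSeq_of_le (Nat.zero_le _), hQ0]
  · rw [hvs_ge _ (by omega), Nat.add_sub_cancel_left, hRm]
  · intro i j hi hj hij
    rcases lt_or_gt_of_ne hij with h | h
    · exact hne i j h hj
    · exact (hne j i h hi).symm
  · intro i hi1 hi
    rcases le_or_gt i mQ with hiQ | hiQ
    · rw [concatSeq_of_le hiQ, concatSeq_of_le hiQ, concatSeq_of_le (by omega : i - 1 ≤ mQ)]
      exact hQE i hi1 hiQ
    · rw [concatSeq_of_lt hiQ, hvs_ge _ (by omega : mQ ≤ i - 1), hvs_ge _ hiQ.le,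
        show i - 1 - mQ = i - mQ - 1 by omega]
      exact hRE _ (by omega) (by omega)

end Paths

section Areas

variable {G : TemporalGraph V} {z a b x y : V} {δ t t' τ : ℕ}

theorem dist_mono (G : TemporalGraph V) (z v : V) : Monotone (G.dist z v) := by
  intro t₁ t₂ h
  unfold dist
  split_ifs
  · exact le_rfl
  · refine sInf_le_sInf ?_
    rintro x ⟨m, vs, ts, hP, ht, hx⟩
    exact ⟨m, vs, ts, hP, h.trans ht, hx⟩

theorem ne_of_dist_lt_dist (hab : G.dist z b t' < G.dist z a t) (htt' : t ≤ t') : a ≠ b := by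
  rintro rfl
  exact (G.dist_mono z a htt').not_gt hab

theorem self_notMem_areaB : (b, τ) ∉ G.AreaB z b t' :=
  fun h => (G.dist_mono z b h.2.2).not_gt h.1

theorem left_notMem_areaAB : (a, τ) ∉ G.AreaAB z a t b t' :=
  fun h => (G.dist_mono z a h.2.2.1).not_gt h.2.1

theorem right_notMem_areaAB : (b, τ) ∉ G.AreaAB z a t b t' :=
  fun h => (G.dist_mono z b h.2.2.2).not_gt h.1

theorem E_of_subB_E {e : Sym2 V} (hE : (G.SubB z δ b t').E τ e) : G.E τ e := by
  rcases hE with ⟨h, -⟩ | ⟨h, -⟩ <;> exact h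

theorem mem_areaB_of_subB_E (hE : (G.SubB z δ b t').E τ s(x, y)) (hx : x ≠ b) :
    (x, τ) ∈ G.AreaB z b t' := by
  rcases hE with ⟨-, x', y', he, hx', hy'⟩ | ⟨-, -, x', he, hx'⟩ <;>
    rcases Sym2.eq_iff.mp he with ⟨rfl, rfl⟩ | ⟨rfl, rfl⟩
  exacts [hx', hy', hx', absurd rfl hx]

theorem time_of_subB_E_right (hE : (G.SubB z δ b t').E τ s(x, b)) : τ ≤ t' ∧ t' ≤ τ + δ := by
  rcases hE with ⟨-, x', y', he, hx', hy'⟩ | ⟨-, hδ, x', -, hx'⟩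
  · rcases Sym2.eq_iff.mp he with ⟨-, rfl⟩ | ⟨-, rfl⟩
    exacts [absurd hy' self_notMem_areaB, absurd hx' self_notMem_areaB]
  · exact ⟨hx'.2.2, hδ⟩

theorem E_of_subAB_E {e : Sym2 V} (hE : (G.SubAB z δ a t b t').E τ e) : G.E τ e := by
  rcases hE with ⟨h, -⟩ | ⟨h, -⟩ | ⟨h, -⟩ <;> exact h

theorem mem_areaAB_of_subAB_E (hE : (G.SubAB z δ a t b t').E τ s(x, y)) (hxa : x ≠ a)
    (hxb : x ≠ b) : (x, τ) ∈ G.AreaAB z a t b t' := by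
  rcases hE with ⟨-, x', y', he, hx', hy'⟩ | ⟨-, rfl, x', he, hx'⟩ |
      ⟨-, -, x', he, hx' | ⟨rfl, -⟩⟩ <;>
    rcases Sym2.eq_iff.mp he with ⟨rfl, rfl⟩ | ⟨rfl, rfl⟩
  exacts [hx', hy', absurd rfl hxa, hx', hx', absurd rfl hxb, absurd rfl hxa, absurd rfl hxb]

theorem time_eq_of_subAB_E_left (hab : a ≠ b) (hE : (G.SubAB z δ a t b t').E τ s(a, y)) :
    τ = t := by
  rcases hE with ⟨-, x', y', he, hx', hy'⟩ | ⟨-, hτ, -⟩ | ⟨-, -, x', he, hx' | ⟨-, hτ⟩⟩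
  · rcases Sym2.eq_iff.mp he with ⟨rfl, -⟩ | ⟨rfl, -⟩
    exacts [absurd hx' left_notMem_areaAB, absurd hy' left_notMem_areaAB]
  · exact hτ
  · rcases Sym2.eq_iff.mp he with ⟨rfl, -⟩ | ⟨rfl, -⟩
    exacts [absurd hx' left_notMem_areaAB, absurd rfl hab]
  · exact hτ

theorem time_of_subAB_E_right (hab : a ≠ b) (htt' : t ≤ t')
    (hE : (G.SubAB z δ a t b t').E τ s(x, b)) : τ ≤ t' ∧ t' ≤ τ + δ := by
  rcases hE with ⟨-, x', y', he, hx', hy'⟩ | ⟨-, -, x', he, hx'⟩ | ⟨-, hδ, x', -, hx' | ⟨-, rfl⟩⟩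
  · rcases Sym2.eq_iff.mp he with ⟨-, rfl⟩ | ⟨-, rfl⟩
    exacts [absurd hy' right_notMem_areaAB, absurd hx' right_notMem_areaAB]
  · rcases Sym2.eq_iff.mp he with ⟨-, rfl⟩ | ⟨-, rfl⟩
    exacts [absurd hx' right_notMem_areaAB, absurd rfl hab]
  · exact ⟨hx'.2.2.2, hδ⟩
  · exact ⟨htt', hδ⟩

end Areas

section Approach

variable {G : TemporalGraph V} {z s u : V} {δ t t' m : ℕ} {vs : ℕ → V} {ts : ℕ → ℕ}

/-- The invariant certified by a finite entry `T[u,t']`. For `m = 0` the path does not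
constrain `ts 0`, which then plays the role of the arrival time. -/
def IsApproach (G : TemporalGraph V) (z : V) (δ : ℕ) (s u : V) (t' m : ℕ) (vs : ℕ → V)
    (ts : ℕ → ℕ) : Prop :=
  G.IsRestlessPath δ s u m vs ts ∧ ts m ≤ t' ∧ t' ≤ ts m + δ ∧
    ∀ i < m, G.dist z u t' < G.dist z (vs i) (ts (i + 1))

theorem isApproach_nil (G : TemporalGraph V) (z : V) (δ : ℕ) (s : V) (t' : ℕ) :
    G.IsApproach z δ s s t' 0 (fun _ => s) (fun _ => t') :=
  ⟨⟨⟨rfl, rfl, by omega, by omega, by omega⟩, by omega⟩, le_rfl, Nat.le_add_right _ _, by omega⟩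

theorem IsRestlessPath.isApproach_of_subB (hsu : s ≠ u)
    (hP : (G.SubB z δ u t').IsRestlessPath δ s u m vs ts) : G.IsApproach z δ s u t' m vs ts := by
  obtain ⟨hle, hδ⟩ := time_of_subB_E_right (hP.1.last_edge (hP.1.one_le_length hsu))
  exact ⟨hP.mono fun _ _ => E_of_subB_E, hle, hδ,
    fun i hi => (mem_areaB_of_subB_E (hP.1.edge hi) (hP.1.ne_last hi)).1⟩

variable {v : V}

theorem IsRestlessPath.time_one_of_subAB (hvu : v ≠ u)
    (hP : (G.SubAB z δ v t u t').IsRestlessPath δ v u m vs ts) : ts 1 = t := by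
  have h := hP.1.edge (hP.1.one_le_length hvu)
  rw [hP.1.1] at h
  exact time_eq_of_subAB_E_left hvu h

theorem IsRestlessPath.mem_areaAB_of_subAB
    (hP : (G.SubAB z δ v t u t').IsRestlessPath δ v u m vs ts) {j : ℕ} (hj1 : 1 ≤ j)
    (hj : j < m) : (vs j, ts (j + 1)) ∈ G.AreaAB z v t u t' :=
  mem_areaAB_of_subAB_E (hP.1.edge hj) (hP.1.ne_first hj1 hj.le) (hP.1.ne_last hj)

theorem IsRestlessPath.isApproach_of_subAB (hvu : G.dist z u t' < G.dist z v t)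
    (htt' : t ≤ t') (hP : (G.SubAB z δ v t u t').IsRestlessPath δ v u m vs ts) :
    G.IsApproach z δ v u t' m vs ts := by
  have hne := ne_of_dist_lt_dist hvu htt'
  obtain ⟨hle, hδ⟩ := time_of_subAB_E_right hne htt' (hP.1.last_edge (hP.1.one_le_length hne))
  refine ⟨hP.mono fun _ _ => E_of_subAB_E, hle, hδ, fun i hi => ?_⟩
  rcases Nat.eq_zero_or_pos i with rfl | hi0
  · rwa [hP.1.1, hP.time_one_of_subAB hne]
  · exact (hP.mem_areaAB_of_subAB hi0 hi).1

theorem IsApproach.append_subAB {mQ mR : ℕ} {vsQ vsR : ℕ → V} {tsQ tsR : ℕ → ℕ}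
    (hQ : G.IsApproach z δ s v t mQ vsQ tsQ) (hvu : G.dist z u t' < G.dist z v t)
    (htt' : t ≤ t') (hR : (G.SubAB z δ v t u t').IsRestlessPath δ v u mR vsR tsR) :
    G.IsApproach z δ s u t' (mQ + mR) (concatSeq mQ vsQ vsR) (concatSeq mQ tsQ tsR) := by
  obtain ⟨hQP, hQt, hQδ, hQdist⟩ := hQ
  have hne := ne_of_dist_lt_dist hvu htt'
  have hmR := hR.1.one_le_length hne
  have hRt := hR.time_one_of_subAB hne
  obtain ⟨hRP, hRt', hRδ, hRdist⟩ := hR.isApproach_of_subAB hvu htt'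
  have hRclose : ∀ j, 1 ≤ j → j ≤ mR → ∃ τ, t ≤ τ ∧ G.dist z (vsR j) τ < G.dist z v t := by
    intro j hj1 hj
    rcases hj.lt_or_eq with hj | rfl
    · exact ⟨_, (hR.mem_areaAB_of_subAB hj1 hj).2.2.1, (hR.mem_areaAB_of_subAB hj1 hj).2.1⟩
    · exact ⟨t', htt', hRP.1.2.1 ▸ hvu⟩
  have hdisj : ∀ i < mQ, ∀ j, 1 ≤ j → j ≤ mR → vsQ i ≠ vsR j := by
    intro i hi j hj1 hj heq
    obtain ⟨τ, htτ, hτ⟩ := hRclose j hj1 hj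
    have hτi : tsQ (i + 1) ≤ τ := (hQP.1.time_le_time (by omega) hi le_rfl).trans (hQt.trans htτ)
    refine lt_irrefl (G.dist z (vsQ i) (tsQ (i + 1))) ?_
    calc G.dist z (vsQ i) (tsQ (i + 1)) ≤ G.dist z (vsQ i) τ := G.dist_mono z _ hτi
      _ = G.dist z (vsR j) τ := by rw [heq]
      _ < G.dist z v t := hτ
      _ < G.dist z (vsQ i) (tsQ (i + 1)) := hQdist i hi
  have hts_end : concatSeq mQ tsQ tsR (mQ + mR) = tsR mR := by
    rw [concatSeq_of_lt (by omega), Nat.add_sub_cancel_left]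
  refine ⟨hQP.append hRP hdisj (hRt ▸ ⟨hQt, hQδ⟩), hts_end ▸ hRt', hts_end ▸ hRδ, ?_⟩
  intro i hi
  rcases lt_or_ge i mQ with hiQ | hiQ
  · rw [concatSeq_of_le hiQ.le, concatSeq_of_le hiQ]
    exact hvu.trans (hQdist i hiQ)
  · rw [concatSeq_of_ge (hQP.1.2.1.trans hRP.1.1.symm) hiQ, concatSeq_of_lt (by omega),
      show i + 1 - mQ = i - mQ + 1 by omega]
    exact hRdist _ (by omega)

end Approach

section Table

variable {G H : TemporalGraph V} {s z a b : V} {δ ℓ : ℕ}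

theorem exists_isRestlessPath_of_restlessDist_ne_top (h : H.restlessDist δ a b ≠ ⊤) :
    ∃ m vs ts, H.IsRestlessPath δ a b m vs ts ∧ (m : ℕ∞) = H.restlessDist δ a b := by
  obtain ⟨m, vs, ts, hP, hm⟩ := ENat.sInf_mem_of_ne_top h
  exact ⟨m, vs, ts, hP, hm.symm⟩

theorem exists_isApproach_of_tableBase_ne_top {u : V} {t' : ℕ}
    (h : tableBase G s z δ ℓ u t' ≠ ⊤) :
    ∃ m vs ts, G.IsApproach z δ s u t' m vs ts ∧ (m : ℕ∞) ≤ tableBase G s z δ ℓ u t' := by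
  by_cases hus : u = s
  · subst hus
    exact ⟨0, _, _, isApproach_nil G z δ u t', by simp⟩
  rw [tableBase, if_neg hus] at h ⊢
  split_ifs at h ⊢
  · obtain ⟨m, vs, ts, hP, hm⟩ := exists_isRestlessPath_of_restlessDist_ne_top h
    exact ⟨m, vs, ts, hP.isApproach_of_subB (Ne.symm hus), hm.le⟩
  · exact absurd rfl h

theorem exists_isApproach_of_tableFuel_ne_top (n : ℕ) (u : V) (t' : ℕ)
    (h : tableFuel G s z δ ℓ n u t' ≠ ⊤) :
    ∃ m vs ts, G.IsApproach z δ s u t' m vs ts ∧ (m : ℕ∞) ≤ tableFuel G s z δ ℓ n u t' := by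
  induction n generalizing u t' with
  | zero => exact exists_isApproach_of_tableBase_ne_top h
  | succ n ih =>
    rw [tableFuel] at h ⊢
    split_ifs at h ⊢
    · exact exists_isApproach_of_tableBase_ne_top h
    rw [sInf_insert, top_inf_eq] at h ⊢
    obtain ⟨v, t, ℓ', -, htt', -, hvu, -, -, -, hR, hx⟩ := ENat.sInf_mem_of_ne_top h
    rw [hx] at h ⊢
    obtain ⟨mQ, vsQ, tsQ, hQ, hmQ⟩ := ih v t (WithTop.add_ne_top.mp h).1
    obtain ⟨mR, vsR, tsR, hRP, hmR⟩ :=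
      exists_isRestlessPath_of_restlessDist_ne_top (hR ▸ ENat.natCast_ne_top ℓ')
    refine ⟨mQ + mR, _, _, hQ.append_subAB hvu htt' hRP, ?_⟩
    rw [Nat.cast_add, hmR, hR]
    exact add_le_add hmQ le_rfl

end Table

end TemporalGraph

open TemporalGraph

theorem statement1_general {V : Type*} (G : TemporalGraph V) (s z : V) (δ k : ℕ)
    (tz : ℕ)
    (hT : G.table s z δ k z tz ≤ (k : ℕ∞)) :
    ∃ m vs ts, G.IsRestlessPath δ s z m vs ts ∧ m ≤ k := by
  obtain ⟨m, vs, ts, hA, hm⟩ :=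
    exists_isApproach_of_tableFuel_ne_top _ z tz (ne_top_of_le_ne_top (ENat.natCast_ne_top k) hT)
  exact ⟨m, vs, ts, hA.1, by exact_mod_cast hm.trans hT⟩

/-- If `T[z,t_z] ≤ k` for a vertex appearance `(z,t_z)` with
`z` incident to an edge of `E_{t_z}`, then there is a `δ`-restless temporal
`s`-`z` path of length at most `k` in `G`. -/
theorem statement1 {V : Type*} (G : TemporalGraph V) (s z : V) (δ k : ℕ)
    (hsz : s ≠ z) (hδ : 1 ≤ δ) (hk : 1 ≤ k)
    (hd : G.dist z s 1 ≤ (k : ℕ∞)) (tz : ℕ)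
    (hinc : ∃ e, G.E tz e ∧ z ∈ e)
    (hT : G.table s z δ k z tz ≤ (k : ℕ∞)) :
    ∃ m vs ts, G.IsRestlessPath δ s z m vs ts ∧ m ≤ k :=
  statement1_general G s z δ k tz hT
end
end

section
/- Let G be a temporal graph with destination vertex z and δ ∈ ℕ, and let (v,t) and (u,t') be vertex appearances with t ≤ t' and d(u,t') < d(v,t) < ∞. Then every vertex that belongs to both V(G^{v,t}) and V(G_{v,t}^{u,t'}) is equal to v; that is, V(G^{v,t}) ∩ V(G_{v,t}^{u,t'}) ⊆ {v}. -/
attribute [local instance] Classical.propDecidable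

noncomputable section

open TemporalGraph

/-!
Every vertex of `G^{v,t}` other than `v` has an appearance at some time `≤ t` whose distance
to `z` exceeds `d(v,t)`, and every vertex of `G_{v,t}^{u,t'}` other than `v` has an appearance
at some time `≥ t` whose distance is below `d(v,t)`. Since raising the departure bound only
removes candidate paths, `d(x,·)` is monotone in time, so no vertex other than `v` can do both.
-/

namespace TemporalGraph

variable {V : Type*} (G : TemporalGraph V) (z : V)

theorem monotone_dist (x : V) : Monotone (G.dist z x) := by
  intro s s' h
  unfold TemporalGraph.dist
  split_ifs
  · exact le_rfl
  · apply sInf_le_sInf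
    rintro a ⟨m, vs, ts, hp, hts, rfl⟩
    exact ⟨m, vs, ts, hp, h.trans hts, rfl⟩

theorem eq_or_exists_dist_lt_of_mem_vertexSet_subB {δ : ℕ} {b : V} {t' : ℕ} {x : V}
    (hx : x ∈ (G.SubB z δ b t').vertexSet) :
    x = b ∨ ∃ s ≤ t', G.dist z b t' < G.dist z x s := by
  obtain ⟨s, e, he, hxe⟩ := hx
  rcases he with ⟨-, y, w, rfl, hy, hw⟩ | ⟨-, -, y, rfl, hy⟩
  · rcases Sym2.mem_iff.1 hxe with rfl | rfl
    · exact .inr ⟨s, hy.2.2, hy.1⟩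
    · exact .inr ⟨s, hw.2.2, hw.1⟩
  · rcases Sym2.mem_iff.1 hxe with rfl | rfl
    · exact .inr ⟨s, hy.2.2, hy.1⟩
    · exact .inl rfl

theorem eq_or_exists_dist_lt_of_mem_vertexSet_subAB {δ : ℕ} {a : V} {t : ℕ} {b : V} {t' : ℕ}
    (htt : t ≤ t') (hlt : G.dist z b t' < G.dist z a t) {x : V}
    (hx : x ∈ (G.SubAB z δ a t b t').vertexSet) :
    x = a ∨ ∃ s ≥ t, G.dist z x s < G.dist z a t := by
  obtain ⟨s, e, he, hxe⟩ := hx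
  rcases he with ⟨-, y, w, rfl, hy, hw⟩ | ⟨-, rfl, y, rfl, hy⟩ | ⟨-, -, y, rfl, hy⟩
  · rcases Sym2.mem_iff.1 hxe with rfl | rfl
    · exact .inr ⟨s, hy.2.2.1, hy.2.1⟩
    · exact .inr ⟨s, hw.2.2.1, hw.2.1⟩
  · rcases Sym2.mem_iff.1 hxe with rfl | rfl
    · exact .inl rfl
    · exact .inr ⟨s, hy.2.2.1, hy.2.1⟩
  · rcases Sym2.mem_iff.1 hxe with rfl | rfl
    · rcases hy with hy | ⟨rfl, rfl⟩
      · exact .inr ⟨s, hy.2.2.1, hy.2.1⟩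
      · exact .inl rfl
    · exact .inr ⟨t', htt, hlt⟩

end TemporalGraph

theorem statement7_general {V : Type*} (G : TemporalGraph V) (z : V) (δ : ℕ)
    (v : V) (t : ℕ) (u : V) (t' : ℕ) (htt : t ≤ t')
    (hlt : G.dist z u t' < G.dist z v t) :
    (G.SubB z δ v t).vertexSet ∩ (G.SubAB z δ v t u t').vertexSet ⊆ {v} := by
  rintro x ⟨hB, hAB⟩
  obtain rfl | ⟨s₁, hs₁, h₁⟩ := G.eq_or_exists_dist_lt_of_mem_vertexSet_subB z hB
  · rfl
  obtain rfl | ⟨s₂, hs₂, h₂⟩ := G.eq_or_exists_dist_lt_of_mem_vertexSet_subAB z htt hlt hAB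
  · rfl
  exact absurd (G.monotone_dist z x (hs₁.trans hs₂)) (h₂.trans h₁).not_ge

/-- For vertex appearances `(v,t)` and `(u,t')` with `t ≤ t'`
and `d(u,t') < d(v,t) < ∞`, the vertex sets of `G^{v,t}` and `G_{v,t}^{u,t'}`
intersect in at most the vertex `v`. -/
theorem statement7 {V : Type*} (G : TemporalGraph V) (z : V) (δ : ℕ) (hδ : 1 ≤ δ)
    (v : V) (t : ℕ) (u : V) (t' : ℕ) (htt : t ≤ t')
    (hlt : G.dist z u t' < G.dist z v t) (hfin : G.dist z v t < ⊤) :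
    (G.SubB z δ v t).vertexSet ∩ (G.SubAB z δ v t u t').vertexSet ⊆ {v} :=
  statement7_general G z δ v t u t' htt hlt
end
end

section
/- Let G be a temporal graph with destination vertex z, let t ∈ [τ], and let P = (({v_{i-1},v_i},t_i))_{i=1}^m be a temporal s-z path in G with departure time t_1 ≥ t whose length m equals d(s,t), i.e., P is a shortest temporal s-z path among those departing at a time at least t. Then, with the convention t_{m+1} := t_m, d(v_i, t_{i+1}) = m − i for every i ∈ [0,m]; in particular, along a shortest temporal s-z path the temporal distance to z decreases by exactly one with every time-edge. -/
attribute [local instance] Classical.propDecidable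

noncomputable section

open TemporalGraph

/-! The suffix of `P` from `v_i` is a temporal path departing at `t_{i+1}`, so
`d(v_i, t_{i+1}) ≤ m - i`. Conversely, a shorter `v_i`-`z` path departing at time `≥ t_{i+1}`
could be appended to the prefix of `P` up to `v_i`; this gives a temporal `s`-`z` walk of length
`< m` departing at time `≥ t`, and cutting out the closed subwalks between repeated vertices turns
it into a temporal path that is shorter than `d(s,t)`. -/

def spliceAt {α : Type*} (a : ℕ) (f g : ℕ → α) : ℕ → α :=
  fun k => if k ≤ a then f k else g (k - a)

lemma spliceAt_of_le {α : Type*} {a k : ℕ} (f g : ℕ → α) (h : k ≤ a) :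
    spliceAt a f g k = f k := if_pos h

lemma spliceAt_of_lt {α : Type*} {a k : ℕ} (f g : ℕ → α) (h : a < k) :
    spliceAt a f g k = g (k - a) := if_neg (Nat.not_le.mpr h)

namespace TemporalGraph

variable {V : Type*} {G : TemporalGraph V} {s u z : V} {m : ℕ} {vs : ℕ → V} {ts : ℕ → ℕ}

lemma IsPath.isWalk (h : G.IsPath s z m vs ts) : G.IsWalk s z m vs ts :=
  ⟨h.1, h.2.1, h.2.2.2.1, h.2.2.2.2⟩

lemma IsWalk.monotoneOn_times (h : G.IsWalk s z m vs ts) : MonotoneOn ts (Set.Icc 1 m) :=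
  monotoneOn_of_le_succ Set.ordConnected_Icc fun k _ hk hk' =>
    h.2.2.2 k hk.1 (by simpa [Order.succ_eq_add_one] using hk'.2)

lemma IsWalk.prefix (h : G.IsWalk s z m vs ts) {i : ℕ} (hi : i ≤ m) :
    G.IsWalk s (vs i) i vs ts :=
  ⟨h.1, rfl, fun k hk hki => h.2.2.1 k hk (hki.trans hi),
    fun k hk hki => h.2.2.2 k hk (hki.trans hi)⟩

lemma IsWalk.suffix (h : G.IsWalk s z m vs ts) {i : ℕ} (hi : i ≤ m) :
    G.IsWalk (vs i) z (m - i) (fun k => vs (i + k)) (fun k => ts (i + k)) := by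
  obtain ⟨-, hz, hE, hmono⟩ := h
  refine ⟨rfl, by simpa only [Nat.add_sub_cancel' hi] using hz, fun k hk hkm => ?_,
    fun k hk hkm => ?_⟩
  · simpa only [Nat.add_sub_assoc hk] using hE (i + k) (by omega) (by omega)
  · exact hmono (i + k) (by omega) (by omega)

lemma IsWalk.append {a b : ℕ} {vs' : ℕ → V} {ts' : ℕ → ℕ} (h₁ : G.IsWalk s u a vs ts)
    (h₂ : G.IsWalk u z b vs' ts') (hle : 1 ≤ a → 1 ≤ b → ts a ≤ ts' 1) :
    G.IsWalk s z (a + b) (spliceAt a vs vs') (spliceAt a ts ts') := by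
  obtain ⟨h0, ha, hE, hmono⟩ := h₁
  obtain ⟨h0', hb, hE', hmono'⟩ := h₂
  refine ⟨by rw [spliceAt_of_le _ _ (Nat.zero_le a), h0], ?_, fun k hk hkab => ?_,
    fun k hk hkab => ?_⟩
  · rcases Nat.eq_zero_or_pos b with rfl | hb0
    · rw [Nat.add_zero, spliceAt_of_le _ _ le_rfl, ha, ← h0', hb]
    · rw [spliceAt_of_lt _ _ (by omega), Nat.add_sub_cancel_left, hb]
  · rcases Nat.lt_or_ge a k with hak | hka
    · have hprev : spliceAt a vs vs' (k - 1) = vs' (k - a - 1) := by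
        rcases (Nat.le_sub_one_of_lt hak).eq_or_lt with hk' | hk'
        · rw [spliceAt_of_le _ _ hk'.ge, ← hk', show k - a - 1 = 0 by omega, ha, h0']
        · rw [spliceAt_of_lt _ _ hk', Nat.sub_right_comm]
      rw [hprev, spliceAt_of_lt _ _ hak, spliceAt_of_lt _ _ hak]
      exact hE' (k - a) (by omega) (by omega)
    · rw [spliceAt_of_le _ _ hka, spliceAt_of_le _ _ hka, spliceAt_of_le _ _ (by omega)]
      exact hE k hk hka
  · rcases Nat.lt_or_ge k a with hka | hak
    · rw [spliceAt_of_le _ _ hka.le, spliceAt_of_le _ _ hka]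
      exact hmono k hk hka
    · rw [spliceAt_of_lt _ _ (by omega : a < k + 1)]
      rcases hak.eq_or_lt with rfl | hak
      · rw [spliceAt_of_le _ _ le_rfl, Nat.add_sub_cancel_left]
        exact hle hk (by omega)
      · rw [spliceAt_of_lt _ _ hak, Nat.sub_add_comm hak.le]
        exact hmono' (k - a) (by omega) (by omega)

lemma IsWalk.exists_shorter_of_eq (h : G.IsWalk s z m vs ts) (hsz : s ≠ z) {i j : ℕ}
    (hij : i < j) (hjm : j ≤ m) (heq : vs i = vs j) :
    ∃ m' < m, ∃ vs' ts', G.IsWalk s z m' vs' ts' ∧ ts 1 ≤ ts' 1 := by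
  have hmono := h.monotoneOn_times
  have hsuffix := h.suffix hjm
  rw [← heq] at hsuffix
  refine ⟨i + (m - j), by omega, _, _, (h.prefix (hij.le.trans hjm)).append hsuffix
    fun hi hj => hmono ⟨hi, by omega⟩ ⟨by omega, by omega⟩ (by omega), ?_⟩
  rcases Nat.eq_zero_or_pos i with rfl | hi
  · have hj : j < m := by
      refine hjm.lt_of_ne fun hjm => hsz ?_
      rw [← h.1, heq, hjm, h.2.1]
    rw [spliceAt_of_lt _ _ Nat.one_pos, Nat.sub_zero]
    exact hmono ⟨le_rfl, by omega⟩ ⟨by omega, by omega⟩ (by omega)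
  · rw [spliceAt_of_le _ _ hi]

lemma dist_le_of_isWalk {t : ℕ} (h : G.IsWalk s z m vs ts) (ht : t ≤ ts 1) :
    G.dist z s t ≤ m := by
  induction m using Nat.strong_induction_on generalizing vs ts with
  | _ m ih =>
  by_cases hsz : s = z
  · simp [dist, hsz]
  by_cases hinj : ∀ i j, i ≤ m → j ≤ m → i ≠ j → vs i ≠ vs j
  · rw [dist, if_neg hsz]
    exact sInf_le ⟨m, vs, ts, ⟨h.1, h.2.1, hinj, h.2.2⟩, ht, rfl⟩
  push Not at hinj
  obtain ⟨i, j, hi, hj, hne, heq⟩ := hinj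
  obtain ⟨m', hm', vs', ts', hW, hdep⟩ :
      ∃ m' < m, ∃ vs' ts', G.IsWalk s z m' vs' ts' ∧ ts 1 ≤ ts' 1 := by
    rcases hne.lt_or_gt with hij | hji
    · exact h.exists_shorter_of_eq hsz hij hj heq
    · exact h.exists_shorter_of_eq hsz hji hi heq.symm
  exact (ih m' hm' hW (ht.trans hdep)).trans (by exact_mod_cast hm'.le)

lemma exists_isPath_of_dist_eq {v : V} {t n : ℕ} (h : G.dist z v t = n) :
    ∃ vs ts, G.IsPath v z n vs ts ∧ t ≤ ts 1 := by
  by_cases hvz : v = z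
  · subst hvz
    obtain rfl : n = 0 := by simpa [dist, eq_comm] using h
    exact ⟨fun _ => v, fun _ => t, ⟨rfl, rfl, by omega, by omega, by omega⟩, le_rfl⟩
  rw [dist, if_neg hvz] at h
  have hne : {x : ℕ∞ | ∃ (m : ℕ) (vs : ℕ → V) (ts : ℕ → ℕ),
      G.IsPath v z m vs ts ∧ t ≤ ts 1 ∧ x = (m : ℕ∞)}.Nonempty := by
    by_contra hempty
    rw [Set.not_nonempty_iff_eq_empty.mp hempty, sInf_empty] at h
    exact ENat.top_ne_natCast n h
  obtain ⟨m, vs, ts, hP, ht, hm⟩ := csInf_mem hne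
  rw [h, Nat.cast_inj] at hm
  exact ⟨vs, ts, hm ▸ hP, ht⟩

lemma dist_monotone (z v : V) : Monotone (G.dist z v) := fun t t' htt' => by
  unfold dist
  split_ifs
  · exact le_rfl
  · exact sInf_le_sInf fun x ⟨m, vs, ts, hP, ht, hx⟩ => ⟨m, vs, ts, hP, htt'.trans ht, hx⟩

lemma dist_le_add_dist {a t t' : ℕ} (h : G.IsWalk s u a vs ts) (ha : 1 ≤ a) (ht : t ≤ ts 1)
    (ht' : ts a ≤ t') : G.dist z s t ≤ a + G.dist z u t' := by
  cases hd : G.dist z u t' with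
  | top => simp
  | coe n =>
    obtain ⟨vs', ts', hP, hdep⟩ := exists_isPath_of_dist_eq hd
    have hW := h.append hP.isWalk fun _ _ => ht'.trans hdep
    exact_mod_cast dist_le_of_isWalk hW (by rwa [spliceAt_of_le _ _ ha])

end TemporalGraph

theorem statement18_general {V : Type*} (G : TemporalGraph V) (z s : V) (t : ℕ) (m : ℕ)
    (vs : ℕ → V) (ts : ℕ → ℕ)
    (hP : G.IsPath s z m vs ts) (hdep : t ≤ ts 1)
    (hshortest : G.dist z s t = (m : ℕ∞)) :
    ∀ i ≤ m, G.dist z (vs i) (ts (i + 1)) = ((m - i : ℕ) : ℕ∞) := by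
  intro i hi
  have hupper : G.dist z (vs i) (ts (i + 1)) ≤ (m - i : ℕ) :=
    dist_le_of_isWalk (hP.isWalk.suffix hi) le_rfl
  have hlower : (m : ℕ∞) ≤ i + G.dist z (vs i) (ts (i + 1)) := by
    rcases Nat.eq_zero_or_pos i with rfl | hi0
    · simpa [hP.1, hshortest] using G.dist_monotone z s hdep
    rcases hi.eq_or_lt with rfl | him
    · exact le_self_add
    · rw [← hshortest]
      exact dist_le_add_dist (hP.isWalk.prefix hi) hi0 hdep (hP.2.2.2.2 i hi0 him)
  refine hupper.antisymm ?_
  rwa [ENat.natCast_sub, tsub_le_iff_left]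

/-- Along a shortest temporal `s`-`z` path among those
departing at a time at least `t` (i.e. a temporal `s`-`z` path of length
`m = d(s,t)` with departure time `≥ t`), with the convention `t_{m+1} := t_m`,
one has `d(v_i, t_{i+1}) = m - i` for every `i ∈ [0,m]`. -/
theorem statement18 {V : Type*} (G : TemporalGraph V) (z s : V) (t : ℕ) (m : ℕ)
    (vs : ℕ → V) (ts : ℕ → ℕ)
    (hP : G.IsPath s z m vs ts) (hdep : t ≤ ts 1)
    (hshortest : G.dist z s t = (m : ℕ∞))
    (hconv : ts (m + 1) = ts m) :
    ∀ i ≤ m, G.dist z (vs i) (ts (i + 1)) = ((m - i : ℕ) : ℕ∞) :=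
  statement18_general G z s t m vs ts hP hdep hshortest
end
end
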